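/- Let γ > 0 and let L_a and L_b be independent Gaussian random variables, each with mean γ and variance 2γ. Then X = sign(L_a) · sign(L_b) · min(|L_a|, |L_b|) has probability density function f_X(x) = (1/√(πγ)) · [ e^{−(x−γ)²/(4γ)} · Q((|x| − γ)/√(2γ)) + e^{−(x+γ)²/(4γ)} · Q((|x| + γ)/√(2γ)) ], where Q(t) = (1/√(2π)) ∫_t^∞ e^{−u²/2} du. -/

import Mathlib

open Real MeasureTheory ProbabilityTheory

/-- The Gaussian tail function Q(t) = (1/√(2π)) ∫_t^∞ e^{−u²/2} du. -/
noncomputable def gaussQ (t : ℝ) : ℝ :=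
  (1 / Real.sqrt (2 * Real.pi)) * ∫ u in Set.Ioi t, Real.exp (-u ^ 2 / 2)

/-!
Off the null set `|a| = |b|`, `signedMin a b` is `a` when `b > |a|` and `-a` when `b < -|a|`.
Together with the symmetry `(a, b) ↦ (b, a)`, this makes the law of `signedMin` under `ν ⊗ ν`
twice the sum of `ν` weighted by `ν (|a|, ∞)` and of its reflection weighted by `ν (-∞, -|a|)`.
For `ν = N(γ, 2γ)` the reflection is `N(-γ, 2γ)` and the weights are the Gaussian tails
`Q ((|x| ∓ γ) / √(2γ))`.
-/

open Set Function
open scoped ENNReal NNReal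

namespace Real

lemma measurable_sign : Measurable Real.sign :=
  Measurable.ite measurableSet_Iio measurable_const
    (Measurable.ite measurableSet_Ioi measurable_const measurable_const)

lemma sign_mul_abs (x : ℝ) : Real.sign x * |x| = x := by
  rcases lt_trichotomy x 0 with h | rfl | h
  · rw [sign_of_neg h, abs_of_neg h, neg_one_mul, neg_neg]
  · simp
  · rw [sign_of_pos h, abs_of_pos h, one_mul]

end Real

noncomputable def signedMin (a b : ℝ) : ℝ := Real.sign a * Real.sign b * min |a| |b|

lemma signedMin_comm (a b : ℝ) : signedMin a b = signedMin b a := by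
  rw [signedMin, signedMin, min_comm, mul_comm (Real.sign a)]

lemma measurable_signedMin : Measurable (uncurry signedMin) :=
  ((Real.measurable_sign.comp measurable_fst).mul (Real.measurable_sign.comp measurable_snd)).mul
    (measurable_fst.abs.min measurable_snd.abs)

lemma signedMin_of_abs_lt {a b : ℝ} (h : |a| < b) : signedMin a b = a := by
  have hb : 0 < b := (abs_nonneg a).trans_lt h
  rw [signedMin, Real.sign_of_pos hb, abs_of_pos hb, min_eq_left h.le, mul_one, Real.sign_mul_abs]

lemma signedMin_of_lt_neg_abs {a b : ℝ} (h : b < -|a|) : signedMin a b = -a := by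
  have hb : b < 0 := h.trans_le (neg_nonpos.2 (abs_nonneg a))
  rw [signedMin, Real.sign_of_neg hb, abs_of_neg hb, min_eq_left (by linarith), mul_neg_one,
    neg_mul, Real.sign_mul_abs]

lemma setOf_abs_lt_abs_and_signedMin_mem (a : ℝ) (s : Set ℝ) :
    {b | |a| < |b| ∧ signedMin a b ∈ s} = {b | a ∈ s ∧ |a| < b} ∪ {b | -a ∈ s ∧ b < -|a|} := by
  ext b
  simp only [mem_ofPred_eq, mem_union]
  constructor
  · rintro ⟨hab, hs⟩
    rcases lt_abs.1 hab with h | h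
    · exact Or.inl ⟨signedMin_of_abs_lt h ▸ hs, h⟩
    · have h' : b < -|a| := by linarith
      exact Or.inr ⟨signedMin_of_lt_neg_abs h' ▸ hs, h'⟩
  · rintro (⟨hs, h⟩ | ⟨hs, h⟩)
    · exact ⟨h.trans_le (le_abs_self b), (signedMin_of_abs_lt h).symm ▸ hs⟩
    · exact ⟨by linarith [neg_abs_le b], (signedMin_of_lt_neg_abs h).symm ▸ hs⟩

section SignedMinLaw

variable (ν : Measure ℝ)

lemma measurable_measure_Ioi_abs : Measurable fun x => ν (Ioi |x|) :=
  (Antitone.measurable fun _ _ h => measure_mono (Ioi_subset_Ioi h)).comp measurable_abs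

lemma measurable_measure_Iio_neg_abs : Measurable fun x => ν (Iio (-|x|)) :=
  (Monotone.measurable fun _ _ h => measure_mono (Iio_subset_Iio h)).comp measurable_abs.neg

lemma measure_setOf_abs_lt_abs_and_signedMin_mem (a : ℝ) (s : Set ℝ) :
    ν {b | |a| < |b| ∧ signedMin a b ∈ s} =
      s.indicator (fun x => ν (Ioi |x|)) a + s.indicator (fun x => ν (Iio (-|x|))) (-a) := by
  have hdisj : Disjoint {b | a ∈ s ∧ |a| < b} {b | -a ∈ s ∧ b < -|a|} :=
    disjoint_left.2 fun b h₁ h₂ => by linarith [h₁.2, h₂.2, abs_nonneg a]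
  rw [setOf_abs_lt_abs_and_signedMin_mem,
    measure_union hdisj ((MeasurableSet.const _).inter measurableSet_Iio)]
  congr 1
  · by_cases ha : a ∈ s <;> simp [ha, Ioi]
  · by_cases ha : -a ∈ s <;> simp [ha, Iio]

variable [SFinite ν]

lemma prod_preimage_signedMin_inter_abs_lt {s : Set ℝ} (hs : MeasurableSet s) :
    (ν.prod ν) (uncurry signedMin ⁻¹' s ∩ {p | |p.1| < |p.2|}) =
      ν.withDensity (fun x => ν (Ioi |x|)) s +
        (ν.map Neg.neg).withDensity (fun x => ν (Iio (-|x|))) s := by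
  rw [Measure.prod_apply ((measurable_signedMin hs).inter
    (measurableSet_lt measurable_fst.abs measurable_snd.abs))]
  have hfiber (a : ℝ) : Prod.mk a ⁻¹' (uncurry signedMin ⁻¹' s ∩ {p | |p.1| < |p.2|}) =
      {b | |a| < |b| ∧ signedMin a b ∈ s} := by
    ext b; exact and_comm
  simp_rw [hfiber, measure_setOf_abs_lt_abs_and_signedMin_mem]
  rw [lintegral_add_left ((measurable_measure_Ioi_abs ν).indicator hs), withDensity_apply _ hs,
    withDensity_apply _ hs, ← lintegral_indicator hs, ← lintegral_indicator hs,
    lintegral_map ((measurable_measure_Iio_neg_abs ν).indicator hs) measurable_neg]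

variable [NullSingletonClass ν]

lemma ae_abs_fst_ne_abs_snd : ∀ᵐ p ∂(ν.prod ν), |p.1| ≠ |p.2| := by
  refine (Measure.ae_prod_iff_ae_ae (p := fun p : ℝ × ℝ => |p.1| ≠ |p.2|)
    (measurableSet_eq_fun measurable_fst.abs measurable_snd.abs).compl).2 (ae_of_all _ fun a => ?_)
  refine measure_mono_null (fun b hb => ?_) ((toFinite {a, -a}).measure_zero ν)
  rcases abs_eq_abs.1 (not_not.1 hb) with h | h
  · exact Or.inl h.symm
  · exact Or.inr (neg_eq_iff_eq_neg.2 h).symm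

lemma prod_preimage_signedMin {s : Set ℝ} (hs : MeasurableSet s) :
    (ν.prod ν) (uncurry signedMin ⁻¹' s) =
      2 * (ν.prod ν) (uncurry signedMin ⁻¹' s ∩ {p | |p.1| < |p.2|}) := by
  set T := uncurry signedMin ⁻¹' s
  set D : Set (ℝ × ℝ) := {p | |p.1| < |p.2|}
  set D' : Set (ℝ × ℝ) := {p | |p.2| < |p.1|}
  have hD : MeasurableSet (T ∩ D) :=
    (measurable_signedMin hs).inter (measurableSet_lt measurable_fst.abs measurable_snd.abs)
  have hD' : MeasurableSet (T ∩ D') :=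
    (measurable_signedMin hs).inter (measurableSet_lt measurable_snd.abs measurable_fst.abs)
  have hswap : Prod.swap ⁻¹' (T ∩ D) = T ∩ D' := by
    ext ⟨a, b⟩
    simp [T, D, D', signedMin_comm a b]
  have hties : T =ᵐ[ν.prod ν] (T ∩ D ∪ T ∩ D' : Set (ℝ × ℝ)) := by
    filter_upwards [ae_abs_fst_ne_abs_snd ν] with p hp
    rw [← inter_union_distrib_left]
    exact propext ⟨fun hT => ⟨hT, lt_or_gt_of_ne hp⟩, And.left⟩
  have hdisj : Disjoint (T ∩ D) (T ∩ D') :=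
    disjoint_left.2 fun p h₁ h₂ => lt_asymm (α := ℝ) h₁.2 h₂.2
  rw [measure_congr hties, measure_union hdisj hD', ← hswap,
    Measure.measurePreserving_swap.measure_preimage hD.nullMeasurableSet, two_mul]

theorem map_signedMin_prod :
    (ν.prod ν).map (uncurry signedMin) =
      (2 : ℝ≥0∞) • (ν.withDensity (fun x => ν (Ioi |x|)) +
        (ν.map Neg.neg).withDensity (fun x => ν (Iio (-|x|)))) := by
  ext s hs
  rw [Measure.map_apply measurable_signedMin hs, prod_preimage_signedMin ν hs,
    prod_preimage_signedMin_inter_abs_lt ν hs, Measure.smul_apply, Measure.add_apply, smul_eq_mul]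

end SignedMinLaw

section Gaussian

lemma gaussianReal_zero_one_Ioi (t : ℝ) : gaussianReal 0 1 (Ioi t) = ENNReal.ofReal (gaussQ t) := by
  rw [gaussianReal_apply_eq_integral 0 one_ne_zero, gaussQ, ← integral_const_mul]
  simp [gaussianPDFReal_def]

lemma gaussQ_nonneg (t : ℝ) : 0 ≤ gaussQ t :=
  mul_nonneg (by positivity) (setIntegral_nonneg measurableSet_Ioi fun u _ => (exp_pos _).le)

lemma gaussianPDFReal_toNNReal_two_mul {γ : ℝ} (hγ : 0 < γ) (m x : ℝ) :
    gaussianPDFReal m (2 * γ).toNNReal x = exp (-(x - m) ^ 2 / (4 * γ)) / (2 * √(π * γ)) := by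
  have hsqrt : √(2 * π * (2 * γ)) = 2 * √(π * γ) := by
    rw [show 2 * π * (2 * γ) = 2 ^ 2 * (π * γ) by ring, Real.sqrt_mul (by positivity),
      Real.sqrt_sq zero_le_two]
  rw [gaussianPDFReal_def, Real.coe_toNNReal _ (by positivity), hsqrt,
    show 2 * (2 * γ) = 4 * γ by ring]
  exact inv_mul_eq_div _ _

lemma gaussianReal_eq_map_zero_one (m : ℝ) (v : ℝ≥0) :
    gaussianReal m v = (gaussianReal 0 1).map (fun u => √v * u + m) := by
  rw [show (fun u => √v * u + m) = (· + m) ∘ (√v * ·) from rfl,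
    ← Measure.map_map (measurable_add_const m) (measurable_const_mul _),
    gaussianReal_map_const_mul, gaussianReal_map_add_const, mul_zero, zero_add, mul_one]
  congr
  ext
  exact (Real.sq_sqrt v.2).symm

lemma gaussianReal_Ioi (m : ℝ) {v : ℝ≥0} (hv : v ≠ 0) (c : ℝ) :
    gaussianReal m v (Ioi c) = ENNReal.ofReal (gaussQ ((c - m) / √v)) := by
  have hσ : 0 < √(v : ℝ) := Real.sqrt_pos.2 (NNReal.coe_pos.2 (pos_iff_ne_zero.2 hv))
  have hpre : (fun u => √v * u + m) ⁻¹' Ioi c = Ioi ((c - m) / √v) := by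
    ext u
    simp only [mem_preimage, mem_Ioi, div_lt_iff₀ hσ]
    constructor <;> intro h <;> linarith
  rw [gaussianReal_eq_map_zero_one, Measure.map_apply (by fun_prop) measurableSet_Ioi, hpre,
    gaussianReal_zero_one_Ioi]

lemma gaussianReal_Iio (m : ℝ) {v : ℝ≥0} (hv : v ≠ 0) (c : ℝ) :
    gaussianReal m v (Iio c) = ENNReal.ofReal (gaussQ ((m - c) / √v)) := by
  have hpre : Neg.neg ⁻¹' Ioi (-c) = Iio c := by simp only [neg_preimage, neg_Ioi, neg_neg]
  rw [← hpre, ← Measure.map_apply measurable_neg measurableSet_Ioi, gaussianReal_map_neg,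
    gaussianReal_Ioi _ hv, neg_sub_neg]

lemma map_signedMin_prod_gaussianReal (m : ℝ) {v : ℝ≥0} (hv : v ≠ 0) :
    ((gaussianReal m v).prod (gaussianReal m v)).map (uncurry signedMin) =
      volume.withDensity fun x => 2 * (gaussianPDF m v x * gaussianReal m v (Ioi |x|) +
        gaussianPDF (-m) v x * gaussianReal m v (Iio (-|x|))) := by
  have := nullSingletonClass_gaussianReal (μ := m) hv
  have hdensity (m' : ℝ) {f : ℝ → ℝ≥0∞} (hf : Measurable f) :
      (gaussianReal m' v).withDensity f = volume.withDensity (gaussianPDF m' v * f) := by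
    rw [withDensity_mul _ (measurable_gaussianPDF _ _) hf, gaussianReal_of_var_ne_zero _ hv]
  rw [map_signedMin_prod, gaussianReal_map_neg, hdensity m (measurable_measure_Ioi_abs _),
    hdensity (-m) (measurable_measure_Iio_neg_abs _),
    ← withDensity_add_left ((measurable_gaussianPDF _ _).mul (measurable_measure_Ioi_abs _)),
    ← withDensity_smul' _ _ ENNReal.ofNat_ne_top]
  rfl

lemma two_mul_gaussianPDF_mul_tails_add {γ : ℝ} (hγ : 0 < γ) (x : ℝ) :
    2 * (gaussianPDF γ (2 * γ).toNNReal x * gaussianReal γ (2 * γ).toNNReal (Ioi |x|) +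
      gaussianPDF (-γ) (2 * γ).toNNReal x * gaussianReal γ (2 * γ).toNNReal (Iio (-|x|))) =
      ENNReal.ofReal (1 / √(π * γ) *
        (exp (-(x - γ) ^ 2 / (4 * γ)) * gaussQ ((|x| - γ) / √(2 * γ)) +
          exp (-(x + γ) ^ 2 / (4 * γ)) * gaussQ ((|x| + γ) / √(2 * γ)))) := by
  have hv : (2 * γ).toNNReal ≠ 0 := by simpa using hγ
  rw [gaussianReal_Ioi γ hv, gaussianReal_Iio γ hv, Real.coe_toNNReal _ (by positivity),
    gaussianPDF, gaussianPDF, gaussianPDFReal_toNNReal_two_mul hγ,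
    gaussianPDFReal_toNNReal_two_mul hγ, sub_neg_eq_add, sub_neg_eq_add, add_comm γ,
    ← ENNReal.ofReal_mul (by positivity), ← ENNReal.ofReal_mul (by positivity),
    ← ENNReal.ofReal_add (mul_nonneg (by positivity) (gaussQ_nonneg _))
      (mul_nonneg (by positivity) (gaussQ_nonneg _)),
    ← ENNReal.ofReal_ofNat 2, ← ENNReal.ofReal_mul zero_le_two]
  congr 1
  ring

end Gaussian

theorem density_of_signed_min_gaussian
    {Ω : Type*} [MeasurableSpace Ω] (μ : Measure Ω) [IsProbabilityMeasure μ]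
    (γ : ℝ) (hγ : 0 < γ)
    (La Lb : Ω → ℝ) (hLa : Measurable La) (hLb : Measurable Lb)
    (hindep : IndepFun La Lb μ)
    (hLa_law : μ.map La = gaussianReal γ (Real.toNNReal (2 * γ)))
    (hLb_law : μ.map Lb = gaussianReal γ (Real.toNNReal (2 * γ)))
    (X : Ω → ℝ)
    (hX : ∀ ω, X ω = Real.sign (La ω) * Real.sign (Lb ω) * min |La ω| |Lb ω|) :
    μ.map X = volume.withDensity
      (fun x => ENNReal.ofReal ((1 / Real.sqrt (Real.pi * γ)) *
        (Real.exp (-(x - γ) ^ 2 / (4 * γ)) * gaussQ ((|x| - γ) / Real.sqrt (2 * γ)) +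
         Real.exp (-(x + γ) ^ 2 / (4 * γ)) * gaussQ ((|x| + γ) / Real.sqrt (2 * γ))))) := by
  have hv : (2 * γ).toNNReal ≠ 0 := by simpa using hγ
  have hX' : X = uncurry signedMin ∘ fun ω => (La ω, Lb ω) := funext hX
  rw [hX', ← Measure.map_map measurable_signedMin (hLa.prodMk hLb),
    (indepFun_iff_map_prod_eq_prod_map_map hLa.aemeasurable hLb.aemeasurable).1 hindep,
    hLa_law, hLb_law, map_signedMin_prod_gaussianReal γ hv]
  congr with x
  exact two_mul_gaussianPDF_mul_tails_add hγ x
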